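/- Let R be a commutative ring that is a ℚ-algebra and let a, b ∈ R. The power series f₁ satisfies the formal differential equation (x²/4 − 1)·f₁″ + (1/4 + (a+b)/2)·x·f₁′ + a·b·f₁ = 0 in R[[x]]. -/

import Mathlib

open PowerSeries

noncomputable def f₁ {R : Type*} [CommRing R] [Algebra ℚ R] (a b : R) : R⟦X⟧ :=
  PowerSeries.mk fun n =>
    if n % 2 = 0 then
      ((Nat.factorial n : ℚ))⁻¹ • ∏ r ∈ Finset.range (n / 2), ((a + (r : R)) * (b + (r : R)))
    else 0

noncomputable def f₂ {R : Type*} [CommRing R] [Algebra ℚ R] (a b : R) : R⟦X⟧ :=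
  PowerSeries.mk fun n =>
    if n % 2 = 1 then
      ((Nat.factorial n : ℚ))⁻¹ • ∏ r ∈ Finset.range (n / 2),
        ((a + (r : R) + algebraMap ℚ R (1/2)) * (b + (r : R) + algebraMap ℚ R (1/2)))
    else 0

noncomputable def f₃ {R : Type*} [CommRing R] [Algebra ℚ R] (a b : R) : R⟦X⟧ :=
  PowerSeries.mk fun n =>
    if n % 2 = 0 then
      ((Nat.factorial n : ℚ))⁻¹ • ∏ r ∈ Finset.range (n / 2), ((a - (r : R)) * (b - (r : R)))
    else 0

noncomputable def f₄ {R : Type*} [CommRing R] [Algebra ℚ R] (a b : R) : R⟦X⟧ :=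
  PowerSeries.mk fun n =>
    if n % 2 = 1 then
      ((Nat.factorial n : ℚ))⁻¹ • ∏ r ∈ Finset.range (n / 2),
        ((a - (r : R) - algebraMap ℚ R (1/2)) * (b - (r : R) - algebraMap ℚ R (1/2)))
    else 0

/-! Comparing coefficients of `x ^ n`, and using that `x f′` and `x² f″` have coefficients
`n cₙ` and `n (n - 1) cₙ`, the equation becomes the two-step recurrence
`4 (n + 2)(n + 1) cₙ₊₂ = (2a + n)(2b + n) cₙ`. For odd `n` both sides vanish, and for `n = 2k`
it is the passage from `∏_{r<k}` to `∏_{r<k+1}`, which adds the factor `(a + k)(b + k)`, together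
with `(2k + 2)! = (2k + 2)(2k + 1) (2k)!`. -/

namespace PowerSeries

variable {R : Type*} [CommRing R]

theorem coeff_X_mul_derivative (f : R⟦X⟧) (n : ℕ) :
    coeff n (X * d⁄dX R f) = n * coeff n f := by
  cases n with
  | zero => simp
  | succ n =>
    rw [coeff_succ_X_mul, coeff_derivative, mul_comm, Nat.cast_succ]

theorem coeff_X_sq_mul_derivative_derivative (f : R⟦X⟧) (n : ℕ) :
    coeff n (X ^ 2 * d⁄dX R (d⁄dX R f)) = n * (n - 1) * coeff n f := by
  cases n with
  | zero => simp [pow_two, mul_assoc]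
  | succ n =>
    rw [pow_two, mul_assoc, coeff_succ_X_mul, coeff_X_mul_derivative, coeff_derivative]
    push_cast
    ring

end PowerSeries

section

variable {R : Type*} [CommRing R] [Algebra ℚ R]

theorem ode_of_coeff_recurrence (a b : R) (f : R⟦X⟧)
    (h : ∀ n : ℕ, 4 * ((n + 2) * (n + 1)) * coeff (n + 2) f = (2 * a + n) * (2 * b + n) * coeff n f) :
    ((1/4 : ℚ) • (X : R⟦X⟧) ^ 2 - 1) * d⁄dX R (d⁄dX R f) +
      ((1/4 : ℚ) • (1 : R⟦X⟧) + (1/2 : ℚ) • C (a + b)) * X * d⁄dX R f +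
      C (a * b) * f = 0 := by
  have h4 : 4 * algebraMap ℚ R (1/4) = 1 := by
    rw [← map_ofNat (algebraMap ℚ R), ← map_mul]; norm_num
  have h2 : algebraMap ℚ R (1/2) = 2 * algebraMap ℚ R (1/4) := by
    rw [← map_ofNat (algebraMap ℚ R), ← map_mul]; norm_num
  ext n
  simp only [sub_mul, add_mul, smul_mul_assoc, one_mul, mul_assoc, map_add, map_sub, coeff_smul,
    coeff_C_mul, coeff_X_mul_derivative, coeff_X_sq_mul_derivative_derivative, coeff_derivative,
    map_zero]
  push_cast [Algebra.smul_def]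
  linear_combination (-algebraMap ℚ R (1/4)) * h n
    + ((n + 2) * (n + 1) * coeff (n + 2) f - a * b * coeff n f) * h4
    + ((a + b) * n * coeff n f) * h2

theorem mul_algebraMap_inv_factorial_add_two (n : ℕ) :
    ((n + 2) * (n + 1) : R) * algebraMap ℚ R ((n + 2).factorial : ℚ)⁻¹ =
      algebraMap ℚ R (n.factorial : ℚ)⁻¹ := by
  have h : ((n + 2) * (n + 1) : ℚ) * ((n + 2).factorial : ℚ)⁻¹ = (n.factorial : ℚ)⁻¹ := by
    rw [Nat.factorial_succ, Nat.factorial_succ]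
    push_cast
    field_simp
    ring
  simpa [map_ofNat] using congrArg (algebraMap ℚ R) h

variable (a b : R)

theorem coeff_f₁_two_mul (k : ℕ) :
    coeff (2 * k) (f₁ a b) = ((2 * k).factorial : ℚ)⁻¹ • ∏ r ∈ Finset.range k, (a + r) * (b + r) := by
  simp [f₁]

theorem coeff_f₁_two_mul_add_one (k : ℕ) : coeff (2 * k + 1) (f₁ a b) = 0 := by
  simp [f₁]

theorem f₁_coeff_recurrence (n : ℕ) :
    4 * ((n + 2) * (n + 1)) * coeff (n + 2) (f₁ a b) =
      (2 * a + n) * (2 * b + n) * coeff n (f₁ a b) := by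
  obtain ⟨k, rfl | rfl⟩ := Nat.even_or_odd' n
  · rw [show 2 * k + 2 = 2 * (k + 1) by ring, coeff_f₁_two_mul, coeff_f₁_two_mul,
      Finset.prod_range_succ, Algebra.smul_def, Algebra.smul_def, show 2 * (k + 1) = 2 * k + 2 by ring]
    have key := mul_algebraMap_inv_factorial_add_two (R := R) (2 * k)
    push_cast at key ⊢
    linear_combination (4 * (a + k) * (b + k) * ∏ r ∈ Finset.range k, (a + r) * (b + r)) * key
  · rw [show 2 * k + 1 + 2 = 2 * (k + 1) + 1 by ring, coeff_f₁_two_mul_add_one,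
      coeff_f₁_two_mul_add_one, mul_zero, mul_zero]

end

/-- `f₁` satisfies `(x²/4 − 1)·f₁″ + (1/4 + (a+b)/2)·x·f₁′ + a·b·f₁ = 0`. -/
theorem stmt2 {R : Type*} [CommRing R] [Algebra ℚ R] (a b : R) :
    ((1/4 : ℚ) • (PowerSeries.X : R⟦X⟧) ^ 2 - 1) * d⁄dX R (d⁄dX R (f₁ a b)) +
      ((1/4 : ℚ) • (1 : R⟦X⟧) + (1/2 : ℚ) • C (a + b)) * PowerSeries.X * d⁄dX R (f₁ a b) +
      C (a * b) * f₁ a b = 0 :=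
  ode_of_coeff_recurrence a b (f₁ a b) (f₁_coeff_recurrence a b)
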